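/- Let E be a real Banach space, T > 0, α ∈ (0,1), c ≥ 0, and let Φ : C([0,T];E) → C([0,T];E) satisfy the singular Volterra estimate ‖Φ(ζ₁)(t) − Φ(ζ₂)(t)‖_E ≤ c ∫₀ᵗ (t−s)^{−α} sup_{0≤τ≤s} ‖ζ₁(τ) − ζ₂(τ)‖_E ds for all ζ₁, ζ₂ ∈ C([0,T];E) and all t ∈ [0,T]. Then Φ has exactly one fixed point in C([0,T];E). -/

import Mathlib

/-!
Weight the distance at time `t` by `exp (lam * t)` (Bielecki's trick). Substituting `u = t - s`,
`∫₀ᵗ (t - s)^(-α) exp (lam * s) ds ≤ exp (lam * t) ∫₀^∞ u^(-α) exp (-lam * u) du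
  = Γ(1 - α) lam^(α - 1) exp (lam * t)`,
so for `lam` large the estimate halves every weighted bound on `ζ₁ - ζ₂`. Since the weights lie
between `1` and `exp (lam * T)`, some iterate `Φ^[n]` is a contraction for the sup distance, and the
Banach fixed point theorem applies.
-/

open Set MeasureTheory Function Filter Topology Real

section WeightedContraction

variable {X E : Type*} [TopologicalSpace X] [CompactSpace X] [MetricSpace E]
  {Φ : C(X, E) → C(X, E)} {w : X → ℝ} {q : ℝ}

lemma dist_iterate_apply_le_of_weighted (hw : ∀ x, 1 ≤ w x)
    (hΦ : ∀ K, 0 ≤ K → ∀ ζ₁ ζ₂ : C(X, E), (∀ x, dist (ζ₁ x) (ζ₂ x) ≤ K * w x) →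
      ∀ x, dist (Φ ζ₁ x) (Φ ζ₂ x) ≤ q * K * w x)
    (hq : 0 ≤ q) (n : ℕ) (ζ₁ ζ₂ : C(X, E)) (x : X) :
    dist (Φ^[n] ζ₁ x) (Φ^[n] ζ₂ x) ≤ q ^ n * dist ζ₁ ζ₂ * w x := by
  induction n generalizing x with
  | zero =>
    simpa using (ζ₁.dist_apply_le_dist x).trans (le_mul_of_one_le_right dist_nonneg (hw x))
  | succ n ih =>
    rw [iterate_succ_apply', iterate_succ_apply', pow_succ', mul_assoc q]
    exact hΦ _ (by positivity) _ _ ih x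

theorem exists_unique_fixedPoint_of_weighted_contraction [CompleteSpace E] [Nonempty E]
    {M : ℝ} (hw : ∀ x, 1 ≤ w x ∧ w x ≤ M) (hM : 0 ≤ M)
    (hΦ : ∀ K, 0 ≤ K → ∀ ζ₁ ζ₂ : C(X, E), (∀ x, dist (ζ₁ x) (ζ₂ x) ≤ K * w x) →
      ∀ x, dist (Φ ζ₁ x) (Φ ζ₂ x) ≤ q * K * w x)
    (hq0 : 0 ≤ q) (hq1 : q < 1) :
    ∃! ζ : C(X, E), Φ ζ = ζ := by
  obtain ⟨n, hn⟩ : ∃ n : ℕ, q ^ n * M < 1 := by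
    have := (tendsto_pow_atTop_nhds_zero_of_lt_one hq0 hq1).mul_const M
    simpa using (this.eventually (gt_mem_nhds (by simp))).exists
  have hlip : LipschitzWith (q ^ n * M).toNNReal Φ^[n] := by
    refine LipschitzWith.of_dist_le' fun ζ₁ ζ₂ =>
      (ContinuousMap.dist_le (by positivity)).2 fun x => ?_
    calc dist (Φ^[n] ζ₁ x) (Φ^[n] ζ₂ x) ≤ q ^ n * dist ζ₁ ζ₂ * w x :=
          dist_iterate_apply_le_of_weighted (fun x => (hw x).1) hΦ hq0 n ζ₁ ζ₂ x
      _ ≤ q ^ n * dist ζ₁ ζ₂ * M := by gcongr; exact (hw x).2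
      _ = q ^ n * M * dist ζ₁ ζ₂ := by ring
  have hcontr : ContractingWith _ Φ^[n] := ⟨Real.toNNReal_lt_one.2 hn, hlip⟩
  have : Nonempty C(X, E) := ⟨.const X (Classical.arbitrary E)⟩
  exact ⟨_, hcontr.isFixedPt_fixedPoint_iterate,
    fun ζ hζ => hcontr.fixedPoint_unique (IsFixedPt.iterate hζ n)⟩

end WeightedContraction

lemma exists_pos_mul_rpow_mul_Gamma_le {β : ℝ} (hβ : 0 < β) (c : ℝ) :
    ∃ lam : ℝ, 0 < lam ∧ c * ((1 / lam) ^ β * Gamma β) ≤ 1 / 2 := by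
  have hlim : Tendsto (fun lam : ℝ => c * ((1 / lam) ^ β * Gamma β)) atTop (𝓝 0) := by
    have h : Tendsto (fun lam : ℝ => (1 / lam) ^ β) atTop (𝓝 0) :=
      (tendsto_rpow_neg_atTop hβ).congr' <| (eventually_gt_atTop 0).mono fun lam hlam => by
        dsimp only
        rw [one_div, inv_rpow hlam.le, rpow_neg hlam.le]
    simpa using (h.mul_const (Gamma β)).const_mul c
  exact ((eventually_gt_atTop 0).and (hlim.eventually (ge_mem_nhds one_half_pos))).exists

lemma integrableOn_rpow_mul_exp_neg_mul_Ioi {α lam : ℝ} (hα : α < 1) (hlam : 0 < lam) :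
    IntegrableOn (fun u : ℝ => u ^ (-α) * exp (-(lam * u))) (Ioi 0) := by
  simpa [neg_mul] using integrableOn_rpow_mul_exp_neg_mul_rpow (p := 1) (by linarith) one_pos hlam

lemma rpow_sub_mul_exp_eq (α lam t s : ℝ) :
    (t - s) ^ (-α) * exp (lam * s)
      = exp (lam * t) * ((t - s) ^ (-α) * exp (-(lam * (t - s)))) := by
  rw [mul_left_comm, ← exp_add]; ring_nf

lemma integrableOn_rpow_sub_mul_exp {α lam t : ℝ} (hα : α < 1) (hlam : 0 < lam) (ht : 0 ≤ t) :
    IntegrableOn (fun s => (t - s) ^ (-α) * exp (lam * s)) (Ioc 0 t) := by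
  have hg : IntervalIntegrable (fun u : ℝ => u ^ (-α) * exp (-(lam * u))) volume 0 t :=
    (intervalIntegrable_iff_integrableOn_Ioc_of_le ht).2 <|
      (integrableOn_rpow_mul_exp_neg_mul_Ioi hα hlam).mono_set Ioc_subset_Ioi_self
  have := (hg.comp_sub_left t).symm.const_mul (exp (lam * t))
  simp_rw [sub_self, sub_zero, ← rpow_sub_mul_exp_eq] at this
  exact (intervalIntegrable_iff_integrableOn_Ioc_of_le ht).1 this

lemma integral_rpow_sub_mul_exp_le {α lam t : ℝ} (hα : α < 1) (hlam : 0 < lam) (ht : 0 ≤ t) :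
    ∫ s in Ioc 0 t, (t - s) ^ (-α) * exp (lam * s)
      ≤ (1 / lam) ^ (1 - α) * Gamma (1 - α) * exp (lam * t) := by
  set g : ℝ → ℝ := fun u => u ^ (-α) * exp (-(lam * u))
  have hg_nonneg : ∀ u ∈ Ioi (0 : ℝ), 0 ≤ g u := fun u hu =>
    mul_nonneg (rpow_nonneg (le_of_lt hu) _) (exp_pos _).le
  calc ∫ s in Ioc 0 t, (t - s) ^ (-α) * exp (lam * s)
      = exp (lam * t) * ∫ u in Ioc 0 t, g u := by
        simp_rw [rpow_sub_mul_exp_eq α lam t, integral_const_mul,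
          ← intervalIntegral.integral_of_le ht]
        simp [intervalIntegral.integral_comp_sub_left g t, g]
    _ ≤ exp (lam * t) * ∫ u in Ioi 0, g u := by
        refine mul_le_mul_of_nonneg_left ?_ (exp_nonneg _)
        exact setIntegral_mono_set (integrableOn_rpow_mul_exp_neg_mul_Ioi hα hlam)
          ((ae_restrict_iff' measurableSet_Ioi).2 (ae_of_all _ hg_nonneg))
          Ioc_subset_Ioi_self.eventuallyLE
    _ = (1 / lam) ^ (1 - α) * Gamma (1 - α) * exp (lam * t) := by
        rw [← integral_rpow_mul_exp_neg_mul_Ioi (by linarith) hlam, mul_comm]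
        simp [g]

lemma sSup_image_le_of_le_monotone {X : Type*} {f p : X → ℝ} {g : ℝ → ℝ} (hg : Monotone g)
    (h : ∀ x, f x ≤ g (p x)) {s : ℝ} (hs : 0 ≤ g s) : sSup (f '' {x | p x ≤ s}) ≤ g s :=
  Real.sSup_le (by rintro _ ⟨x, hx, rfl⟩; exact (h x).trans (hg hx)) hs

section Volterra

variable {E : Type*} [NormedAddCommGroup E] {T : ℝ}

def VolterraEstimate (T α c : ℝ) (Φ : C(Icc (0 : ℝ) T, E) → C(Icc (0 : ℝ) T, E)) : Prop :=
  ∀ ζ₁ ζ₂ : C(Icc (0 : ℝ) T, E), ∀ t : Icc (0 : ℝ) T,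
    ‖Φ ζ₁ t - Φ ζ₂ t‖ ≤ c * ∫ s in Ioc (0 : ℝ) (t : ℝ), ((t : ℝ) - s) ^ (-α) *
      sSup ((fun τ : Icc (0 : ℝ) T => ‖ζ₁ τ - ζ₂ τ‖) '' {τ : Icc (0 : ℝ) T | (τ : ℝ) ≤ s})

lemma VolterraEstimate.dist_apply_le_half {α c lam : ℝ}
    {Φ : C(Icc (0 : ℝ) T, E) → C(Icc (0 : ℝ) T, E)} (hΦ : VolterraEstimate T α c Φ)
    (hα : α < 1) (hc : 0 ≤ c) (hlam : 0 < lam)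
    (hsmall : c * ((1 / lam) ^ (1 - α) * Gamma (1 - α)) ≤ 1 / 2)
    {K : ℝ} (hK : 0 ≤ K) {ζ₁ ζ₂ : C(Icc (0 : ℝ) T, E)}
    (h : ∀ τ, dist (ζ₁ τ) (ζ₂ τ) ≤ K * exp (lam * τ)) (t : Icc (0 : ℝ) T) :
    dist (Φ ζ₁ t) (Φ ζ₂ t) ≤ 1 / 2 * K * exp (lam * t) := by
  have ht : (0 : ℝ) ≤ t := t.2.1
  set S : ℝ → ℝ := fun s =>
    sSup ((fun τ : Icc (0 : ℝ) T => ‖ζ₁ τ - ζ₂ τ‖) '' {τ | (τ : ℝ) ≤ s})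
  have hS_nonneg (s : ℝ) : 0 ≤ S s :=
    Real.sSup_nonneg (by rintro _ ⟨τ, -, rfl⟩; exact norm_nonneg _)
  have hS_le (s : ℝ) : S s ≤ K * exp (lam * s) :=
    sSup_image_le_of_le_monotone (g := fun s => K * exp (lam * s))
      (fun _ _ hab => mul_le_mul_of_nonneg_left (exp_le_exp.2 (by gcongr)) hK)
      (fun τ => by simpa [dist_eq_norm] using h τ) (mul_nonneg hK (exp_nonneg _))
  have hkernel_nonneg : ∀ s ∈ Ioc (0 : ℝ) t, 0 ≤ ((t : ℝ) - s) ^ (-α) :=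
    fun s hs => rpow_nonneg (sub_nonneg.2 hs.2) _
  rw [dist_eq_norm]
  calc ‖Φ ζ₁ t - Φ ζ₂ t‖
      ≤ c * ∫ s in Ioc (0 : ℝ) t, ((t : ℝ) - s) ^ (-α) * S s := hΦ ζ₁ ζ₂ t
    _ ≤ c * ∫ s in Ioc (0 : ℝ) t, K * (((t : ℝ) - s) ^ (-α) * exp (lam * s)) := by
        refine mul_le_mul_of_nonneg_left (integral_mono_of_nonneg ?_
          ((integrableOn_rpow_sub_mul_exp hα hlam ht).const_mul K) ?_) hc
        · exact (ae_restrict_iff' measurableSet_Ioc).2 <| ae_of_all _ fun s hs =>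
            mul_nonneg (hkernel_nonneg s hs) (hS_nonneg s)
        · exact (ae_restrict_iff' measurableSet_Ioc).2 <| ae_of_all _ fun s hs =>
            (mul_le_mul_of_nonneg_left (hS_le s) (hkernel_nonneg s hs)).trans_eq (by ring)
    _ = K * (c * ∫ s in Ioc (0 : ℝ) t, ((t : ℝ) - s) ^ (-α) * exp (lam * s)) := by
        rw [integral_const_mul]; ring
    _ ≤ K * (c * ((1 / lam) ^ (1 - α) * Gamma (1 - α) * exp (lam * t))) := by
        gcongr
        exact integral_rpow_sub_mul_exp_le hα hlam ht
    _ ≤ 1 / 2 * K * exp (lam * t) := by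
        have := mul_le_mul_of_nonneg_right hsmall (mul_nonneg hK (exp_nonneg (lam * t)))
        linarith

end Volterra

theorem volterra_fixed_point_general {E : Type*}
    [NormedAddCommGroup E] [CompleteSpace E]
    (T α c : ℝ) (hα : α ∈ Set.Ioo (0 : ℝ) 1) (hc : 0 ≤ c)
    (Φ : C(Set.Icc (0 : ℝ) T, E) → C(Set.Icc (0 : ℝ) T, E))
    (hΦ : ∀ ζ₁ ζ₂ : C(Set.Icc (0 : ℝ) T, E), ∀ t : Set.Icc (0 : ℝ) T,
      ‖Φ ζ₁ t - Φ ζ₂ t‖ ≤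
        c * ∫ s in Set.Ioc (0 : ℝ) (t : ℝ), ((t : ℝ) - s) ^ (-α) *
          sSup ((fun τ : Set.Icc (0 : ℝ) T => ‖ζ₁ τ - ζ₂ τ‖) ''
            {τ : Set.Icc (0 : ℝ) T | (τ : ℝ) ≤ s})) :
    ∃! ζ : C(Set.Icc (0 : ℝ) T, E), Φ ζ = ζ := by
  obtain ⟨lam, hlam, hsmall⟩ := exists_pos_mul_rpow_mul_Gamma_le (sub_pos.2 hα.2) c
  have hweight : ∀ t : Icc (0 : ℝ) T, 1 ≤ exp (lam * t) ∧ exp (lam * t) ≤ exp (lam * T) :=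
    fun t => ⟨one_le_exp (mul_nonneg hlam.le t.2.1),
      exp_le_exp.2 (mul_le_mul_of_nonneg_left t.2.2 hlam.le)⟩
  exact exists_unique_fixedPoint_of_weighted_contraction hweight (exp_nonneg _)
    (fun _ hK _ _ h => VolterraEstimate.dist_apply_le_half hΦ hα.2 hc hlam hsmall hK h)
    one_half_pos.le one_half_lt_one

/-- An operator `Φ` on `C([0,T];E)` satisfying a singular Volterra-type estimate
`‖Φ(ζ₁)(t) − Φ(ζ₂)(t)‖ ≤ c ∫₀ᵗ (t−s)^{−α} sup_{0≤τ≤s} ‖ζ₁(τ)−ζ₂(τ)‖ ds`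
has exactly one fixed point in `C([0,T];E)`. -/
theorem volterra_fixed_point {E : Type*}
    [NormedAddCommGroup E] [NormedSpace ℝ E] [CompleteSpace E]
    (T α c : ℝ) (hT : 0 < T) (hα : α ∈ Set.Ioo (0 : ℝ) 1) (hc : 0 ≤ c)
    (Φ : C(Set.Icc (0 : ℝ) T, E) → C(Set.Icc (0 : ℝ) T, E))
    (hΦ : ∀ ζ₁ ζ₂ : C(Set.Icc (0 : ℝ) T, E), ∀ t : Set.Icc (0 : ℝ) T,
      ‖Φ ζ₁ t - Φ ζ₂ t‖ ≤
        c * ∫ s in Set.Ioc (0 : ℝ) (t : ℝ), ((t : ℝ) - s) ^ (-α) *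
          sSup ((fun τ : Set.Icc (0 : ℝ) T => ‖ζ₁ τ - ζ₂ τ‖) ''
            {τ : Set.Icc (0 : ℝ) T | (τ : ℝ) ≤ s})) :
    ∃! ζ : C(Set.Icc (0 : ℝ) T, E), Φ ζ = ζ :=
  volterra_fixed_point_general T α c hα hc Φ hΦ
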